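/- Under the interference-alignment hypotheses, let X ⊆ {1,…,k} be a subset such that Σ_{i∈X} rowSpace(S_i) = 𝔽^l, and let Δ be a non-zero l × l matrix over 𝔽 such that rowSpace(S_i · Δ) ⊆ rowSpace(S_i) for every i ∈ X. Then for every u ∈ {2,…,r}, the matrix Δ · (Σ_{j∈X} C_{u,j}) is non-zero. -/

import Mathlib

/-!
Suppose `Δ * ∑_{j ∈ X} C u j = 0` with `u ≠ 0`. Fix `i ∈ X` and a row `y` of `S i * Δ`;
it lies in `V = rowSpace (S i)`. Right multiplication by `C u j` preserves `V` for `j ≠ i`,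
so `y * C u i = -∑_{j ≠ i} y * C u j` lies in `V = rowSpace (S i * C 0 i)` and also in
`rowSpace (S i * C u i)`. These two spaces are independent, hence `y * C u i = 0` and `y = 0`.
Thus `Δ` kills the row spaces of all `S i`, `i ∈ X`, which together span everything.
-/

open Submodule

theorem Submodule.apply_eq_zero_of_sum_apply_eq_zero {R M N ι : Type*} [Ring R]
    [AddCommMonoid M] [AddCommGroup N] [Module R M] [Module R N]
    {V : Submodule R M} {W : Submodule R N} {f : ι → M →ₗ[R] N} {s : Finset ι} {i : ι}
    (hi : i ∈ s) (hmap : ∀ j ∈ s, j ≠ i → V.map (f j) ≤ W)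
    (hdisj : Disjoint (V.map (f i)) W)
    {x : M} (hx : x ∈ V) (hsum : ∑ j ∈ s, f j x = 0) : f i x = 0 := by
  classical
  have hrest : f i x = -∑ j ∈ s.erase i, f j x :=
    eq_neg_of_add_eq_zero_left ((Finset.add_sum_erase s (fun j => f j x) hi).trans hsum)
  refine disjoint_def.1 hdisj _ (mem_map_of_mem hx) ?_
  rw [hrest]
  exact neg_mem <| sum_mem fun j hj =>
    hmap j (Finset.mem_of_mem_erase hj) (Finset.ne_of_mem_erase hj) (mem_map_of_mem hx)

namespace Matrix

theorem span_range_mul {R m n o : Type*} [CommSemiring R] [Fintype n]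
    (A : Matrix m n R) (B : Matrix n o R) :
    span R (Set.range (A * B)) = (span R (Set.range A)).map B.vecMulLinear := by
  rw [map_span, ← Set.range_comp (f := (A : m → n → R))]
  exact congrArg (fun f => span R (Set.range f)) (funext (mul_apply_eq_vecMul A B))

theorem eq_zero_of_vecMul_sum_eq_zero {R n ι : Type*} [CommRing R] [Fintype n] [DecidableEq n]
    {V : Submodule R (n → R)} {C : ι → Matrix n n R} {s : Finset ι} {i : ι}
    (hi : i ∈ s) (hC : IsUnit (C i))
    (hmap : ∀ j ∈ s, j ≠ i → V.map (C j).vecMulLinear ≤ V)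
    (hdisj : Disjoint (V.map (C i).vecMulLinear) V)
    {y : n → R} (hy : y ∈ V) (hsum : y ᵥ* ∑ j ∈ s, C j = 0) : y = 0 := by
  refine vecMul_injective_of_isUnit hC ?_
  change y ᵥ* C i = 0 ᵥ* C i
  rw [zero_vecMul]
  exact Submodule.apply_eq_zero_of_sum_apply_eq_zero hi hmap hdisj hy
    (by simpa only [vecMul_sum, vecMulLinear_apply] using hsum)

end Matrix

open Matrix in
theorem stmt_11 {𝔽 : Type*} [Field 𝔽] (k r l : ℕ)
    (hr : 2 ≤ r)
    (S : Fin k → Matrix (Fin (l / r)) (Fin l) 𝔽)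
    (C : Fin r → Fin k → Matrix (Fin l) (Fin l) 𝔽)
    (hCinv : ∀ u j, IsUnit (C u j))
    (hC1 : ∀ j, C ⟨0, by omega⟩ j = 1)
    (hIA1 : ∀ (i j : Fin k), j ≠ i → ∀ u : Fin r,
      Submodule.span 𝔽 (Set.range (S i * C u j)) = Submodule.span 𝔽 (Set.range (S i)))
    (hIA2 : ∀ i : Fin k, iSupIndep
      fun u : Fin r => Submodule.span 𝔽 (Set.range (S i * C u i)))
    (X : Finset (Fin k))
    (hX : (⨆ i ∈ X, Submodule.span 𝔽 (Set.range (S i))) = ⊤)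
    (Δ : Matrix (Fin l) (Fin l) 𝔽) (hΔ : Δ ≠ 0)
    (hsub : ∀ i ∈ X,
      Submodule.span 𝔽 (Set.range (S i * Δ)) ≤ Submodule.span 𝔽 (Set.range (S i))) :
    ∀ u : Fin r, (u : ℕ) ≠ 0 → Δ * (∑ j ∈ X, C u j) ≠ 0 := by
  intro u hu hzero
  have hdisj : ∀ i, Disjoint ((span 𝔽 (Set.range (S i))).map (C u i).vecMulLinear)
      (span 𝔽 (Set.range (S i))) := fun i => by
    have : Disjoint (span 𝔽 (Set.range (S i * C u i)))
        (span 𝔽 (Set.range (S i * C ⟨0, _⟩ i))) :=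
      (hIA2 i).pairwiseDisjoint (Fin.ne_of_val_ne hu : u ≠ ⟨0, by omega⟩)
    simpa only [hC1, Matrix.mul_one, span_range_mul] using this
  have hrow : ∀ i ∈ X, ∀ m, S i m ᵥ* Δ = 0 := fun i hi m =>
    eq_zero_of_vecMul_sum_eq_zero hi (hCinv u i)
      (fun j _ hji => (span_range_mul _ _).symm.trans_le (hIA1 i j hji u).le) (hdisj i)
      (hsub i hi (mul_apply_eq_vecMul (S i) Δ m ▸ subset_span (Set.mem_range_self m)))
      (by rw [vecMul_vecMul, hzero, vecMul_zero])
  have hker : ⊤ ≤ LinearMap.ker Δ.vecMulLinear :=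
    hX ▸ iSup₂_le fun i hi => span_le.2 (Set.range_subset_iff.2 (hrow i hi))
  exact hΔ (ext_iff_vecMul.2 fun v => by simpa using hker (mem_top (x := v)))
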